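/- Let K : ℝ → ℝ be a smoothing kernel with bound M, let ν > 0, and set h_ν(x) = (1/ν)·K(x/ν). Assume h_ν is Lipschitz continuous on ℝ. Then the function σ ↦ sup_{x ∈ ℝ} V_ν(x,σ) is continuous on (0,∞). -/

import Mathlib

open MeasureTheory ProbabilityTheory Real Filter

/-- The short-exposure PSF `h_ν(x) = (1/ν) K(x/ν)`. -/
noncomputable def shortPSF (K : ℝ → ℝ) (ν : ℝ) (x : ℝ) : ℝ := (1 / ν) * K (x / ν)

/-- `V_ν(x,σ) = Var[h_ν(x-Θ)] = E[h_ν(x-Θ)²] − (E[h_ν(x-Θ)])²` where `Θ ~ N(0,σ²)`. -/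
noncomputable def Vnu (K : ℝ → ℝ) (ν σ x : ℝ) : ℝ :=
  (∫ θ, (shortPSF K ν (x - θ)) ^ 2 ∂(gaussianReal 0 (σ ^ 2).toNNReal))
    - (∫ θ, shortPSF K ν (x - θ) ∂(gaussianReal 0 (σ ^ 2).toNNReal)) ^ 2

/-!
Substituting `θ = σ z` writes `V_ν(x, σ)` through a standard Gaussian `Z`. For a bounded
`L`-Lipschitz `h`, `|h(x - σZ) - h(x - σ'Z)| ≤ L |σ - σ'| |Z|` and `E|Z| < ∞`, so the first and
second moments of `h(x - σZ)`, hence the variance, are Lipschitz in `σ` uniformly in `x`; a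
supremum of uniformly Lipschitz functions is Lipschitz.
-/

open scoped NNReal

lemma LipschitzWith.ciSup {ι α : Type*} [Nonempty ι] [PseudoMetricSpace α] {K : ℝ≥0}
    {F : ι → α → ℝ} (hF : ∀ i, LipschitzWith K (F i))
    (hbdd : ∀ a, BddAbove (Set.range fun i => F i a)) :
    LipschitzWith K fun a => ⨆ i, F i a :=
  LipschitzWith.of_le_add_mul K fun a b => ciSup_le fun i =>
    calc F i a ≤ F i b + K * dist a b := (hF i).le_add_mul a b
      _ ≤ (⨆ i, F i b) + K * dist a b := by gcongr; exact le_ciSup (hbdd b) i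

lemma LipschitzWith.sq {α : Type*} [PseudoMetricSpace α] {K B : ℝ≥0} {f : α → ℝ}
    (hf : LipschitzWith K f) (hB : ∀ a, |f a| ≤ B) :
    LipschitzWith (2 * B * K) fun a => f a ^ 2 := by
  refine LipschitzWith.of_dist_le_mul fun a b => ?_
  have hsum : |f a + f b| ≤ 2 * B := (abs_add_le _ _).trans (by linarith [hB a, hB b])
  calc dist (f a ^ 2) (f b ^ 2) = |f a + f b| * dist (f a) (f b) := by
        rw [Real.dist_eq, Real.dist_eq, sq_sub_sq, abs_mul]
    _ ≤ 2 * B * (K * dist a b) :=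
        mul_le_mul hsum (hf.dist_le_mul a b) dist_nonneg (by positivity)
    _ = ↑(2 * B * K) * dist a b := by push_cast; ring

section ScaleMixture

variable {μ : Measure ℝ} {f : ℝ → ℝ} {K : ℝ≥0}

lemma LipschitzWith.integrable_comp_sub_mul [IsFiniteMeasure μ] (hf : LipschitzWith K f)
    (hμ : Integrable (fun z => |z|) μ) (x σ : ℝ) : Integrable (fun z => f (x - σ * z)) μ := by
  refine ((integrable_const |f x|).add (hμ.const_mul (K * |σ|))).mono'
    (hf.continuous.comp (by fun_prop)).aestronglyMeasurable (ae_of_all _ fun z => ?_)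
  have hlip := hf.dist_le_mul (x - σ * z) x
  rw [Real.dist_eq, Real.dist_eq, sub_sub_cancel_left, abs_neg, abs_mul] at hlip
  rw [Pi.add_apply, Real.norm_eq_abs]
  linarith [abs_sub_abs_le_abs_sub (f (x - σ * z)) (f x)]

lemma LipschitzWith.integral_comp_sub_mul [IsFiniteMeasure μ] (hf : LipschitzWith K f)
    (hμ : Integrable (fun z => |z|) μ) (x : ℝ) :
    LipschitzWith (K * (∫ z, |z| ∂μ).toNNReal) fun σ => ∫ z, f (x - σ * z) ∂μ := by
  refine LipschitzWith.of_dist_le_mul fun σ σ' => ?_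
  have hpt : ∀ z, ‖f (x - σ * z) - f (x - σ' * z)‖ ≤ K * dist σ σ' * |z| := fun z => by
    have hdist : dist (x - σ * z) (x - σ' * z) = dist σ σ' * |z| := by
      rw [Real.dist_eq, Real.dist_eq, ← abs_mul, ← abs_neg]
      congr 1
      ring
    rw [← dist_eq_norm, mul_assoc, ← hdist]
    exact hf.dist_le_mul _ _
  rw [Real.dist_eq, ← integral_sub (hf.integrable_comp_sub_mul hμ x σ)
    (hf.integrable_comp_sub_mul hμ x σ'), ← Real.norm_eq_abs]
  calc ‖∫ z, f (x - σ * z) - f (x - σ' * z) ∂μ‖ ≤ ∫ z, K * dist σ σ' * |z| ∂μ :=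
        norm_integral_le_of_norm_le (hμ.const_mul _) (ae_of_all _ hpt)
    _ = ↑(K * (∫ z, |z| ∂μ).toNNReal) * dist σ σ' := by
        rw [integral_const_mul, NNReal.coe_mul,
          Real.coe_toNNReal _ (integral_nonneg fun _ => abs_nonneg _)]
        ring

variable [IsProbabilityMeasure μ] {B : ℝ}

lemma abs_integral_comp_le (hB : ∀ y, |f y| ≤ B) (g : ℝ → ℝ) : |∫ z, f (g z) ∂μ| ≤ B := by
  simpa using norm_integral_le_of_norm_le_const (μ := μ)
    (ae_of_all _ fun z => (Real.norm_eq_abs _).trans_le (hB (g z)))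

lemma integral_sq_sub_sq_integral_le (hB : ∀ y, |f y| ≤ B) (g : ℝ → ℝ) :
    (∫ z, f (g z) ^ 2 ∂μ) - (∫ z, f (g z) ∂μ) ^ 2 ≤ B ^ 2 := by
  have hsq : ∀ y, |f y ^ 2| ≤ B ^ 2 := fun y => by
    rw [abs_pow]; exact pow_le_pow_left₀ (abs_nonneg _) (hB y) 2
  linarith [le_of_abs_le (abs_integral_comp_le (μ := μ) (f := fun y => f y ^ 2) hsq g),
    sq_nonneg (∫ z, f (g z) ∂μ)]

lemma LipschitzWith.integral_sq_sub_sq_integral_comp_sub_mul {B : ℝ≥0} (hf : LipschitzWith K f)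
    (hB : ∀ y, |f y| ≤ B) (hμ : Integrable (fun z => |z|) μ) (x : ℝ) :
    LipschitzWith (4 * B * K * (∫ z, |z| ∂μ).toNNReal)
      fun σ => (∫ z, f (x - σ * z) ^ 2 ∂μ) - (∫ z, f (x - σ * z) ∂μ) ^ 2 := by
  have hsecond := (hf.sq hB).integral_comp_sub_mul hμ x
  have hfirst := (hf.integral_comp_sub_mul hμ x).sq fun σ =>
    abs_integral_comp_le (μ := μ) hB fun z => x - σ * z
  exact (hsecond.sub hfirst).weaken (le_of_eq (by ring))

end ScaleMixture

lemma gaussianReal_sq_toNNReal_eq_map (σ : ℝ) :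
    gaussianReal 0 (σ ^ 2).toNNReal = (gaussianReal 0 1).map (σ * ·) := by
  rw [gaussianReal_map_const_mul, mul_zero, mul_one]
  congr
  exact Real.toNNReal_of_nonneg (sq_nonneg σ)

lemma integrable_abs_gaussianReal : Integrable (fun z => |z|) (gaussianReal 0 1) :=
  ((memLp_id_gaussianReal 1).integrable le_rfl).abs

lemma Vnu_eq_integral_gaussianReal_one (K : ℝ → ℝ) (ν σ x : ℝ) (hK : Continuous (shortPSF K ν)) :
    Vnu K ν σ x = (∫ z, shortPSF K ν (x - σ * z) ^ 2 ∂gaussianReal 0 1)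
      - (∫ z, shortPSF K ν (x - σ * z) ∂gaussianReal 0 1) ^ 2 := by
  have hmap (g : ℝ → ℝ) (hg : Continuous g) :
      ∫ θ, g (x - θ) ∂gaussianReal 0 (σ ^ 2).toNNReal = ∫ z, g (x - σ * z) ∂gaussianReal 0 1 := by
    rw [gaussianReal_sq_toNNReal_eq_map, integral_map (f := fun θ => g (x - θ)) (by fun_prop)
      (hg.comp (by fun_prop)).aestronglyMeasurable]
  rw [Vnu, hmap (fun y => shortPSF K ν y ^ 2) (hK.pow 2), hmap _ hK]

lemma abs_shortPSF_le {K : ℝ → ℝ} {M : ℝ} (hK0 : ∀ x, 0 ≤ K x) (hKM : ∀ x, K x ≤ M) (ν y : ℝ) :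
    |shortPSF K ν y| ≤ M / |ν| := by
  rw [shortPSF, abs_mul, abs_of_nonneg (hK0 _), one_div, abs_inv]
  exact (mul_le_mul_of_nonneg_left (hKM _) (by positivity)).trans_eq (inv_mul_eq_div _ _)

theorem supVar_continuousOn_of_lipschitz_general
    (K : ℝ → ℝ) (M ν : ℝ)
    (hK0 : ∀ x, 0 ≤ K x) (hKM : ∀ x, K x ≤ M)
    (L : NNReal) (hLip : LipschitzWith L (shortPSF K ν)) :
    ContinuousOn (fun σ : ℝ => ⨆ x : ℝ, Vnu K ν σ x) (Set.Ioi 0) := by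
  have hbound (y : ℝ) : |shortPSF K ν y| ≤ (M / |ν|).toNNReal :=
    (abs_shortPSF_le hK0 hKM ν y).trans (Real.le_coe_toNNReal _)
  simp only [Vnu_eq_integral_gaussianReal_one K ν _ _ hLip.continuous]
  refine (LipschitzWith.ciSup (fun x => hLip.integral_sq_sub_sq_integral_comp_sub_mul hbound
    integrable_abs_gaussianReal x) fun σ => ?_).continuous.continuousOn
  exact ⟨_, Set.forall_mem_range.2 fun x => integral_sq_sub_sq_integral_le hbound _⟩

theorem supVar_continuousOn_of_lipschitz
    (K : ℝ → ℝ) (M ν : ℝ) (hν : 0 < ν)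
    (hK0 : ∀ x, 0 ≤ K x) (hKM : ∀ x, K x ≤ M)
    (hKeven : ∀ x, K (-x) = K x) (hKint : Integrable K)
    (L : NNReal) (hLip : LipschitzWith L (shortPSF K ν)) :
    ContinuousOn (fun σ : ℝ => ⨆ x : ℝ, Vnu K ν σ x) (Set.Ioi 0) :=
  supVar_continuousOn_of_lipschitz_general K M ν hK0 hKM L hLip
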